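/- The three quivers of types 4_{3a}, 4_{3b}, 4_2 (with all vertex dimensions 1) have 5, 8 and 6 primitive oriented cycles respectively; in particular these three numbers are pairwise distinct. -/

import Mathlib

/-!
A cycle is primitive exactly when it passes through no vertex twice: if some vertex repeats,
rotating the cycle to start there splits it into two cycles at that vertex; conversely, when a
rotation splits as two cycles, both pieces start at the same vertex. Hence a primitive cycle
is no longer than the number of vertices and consists of genuine arrows, so the rotation classes
are found by a finite search: the three 2-cycles and two triangles of `4_{3a}`, the `2 * 2 * 2`
triangles of `4_{3b}` and the `2 * 3` two-cycles of `4_2`.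
-/

/-- An edge of a quiver with arrow-count function `a : V → V → ℕ` is a triple
`(s, t, k)` with `k < a s t`. A list of such triples is an oriented cycle if it
is nonempty, every entry is a genuine arrow, consecutive arrows are composable,
and the last arrow ends where the first one starts. -/
def IsOrientedCycle {V : Type*} (a : V → V → ℕ) (l : List (V × V × ℕ)) : Prop :=
  l ≠ [] ∧ (∀ e ∈ l, e.2.2 < a e.1 e.2.1) ∧
    l.Chain' (fun e f => e.2.1 = f.1) ∧
    l.getLast?.map (fun e => e.2.1) = l.head?.map (fun e => e.1)

/-- An oriented cycle is primitive if no cyclic rotation of it decomposes as the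
concatenation of two nontrivial oriented cycles. -/
def IsPrimitiveCycle {V : Type*} (a : V → V → ℕ) (l : List (V × V × ℕ)) : Prop :=
  IsOrientedCycle a l ∧
    ¬ ∃ (k : ℕ) (l₁ l₂ : List (V × V × ℕ)),
        IsOrientedCycle a l₁ ∧ IsOrientedCycle a l₂ ∧ l.rotate k = l₁ ++ l₂

/-- Cyclic-rotation relation on primitive cycles: the number of primitive
oriented cycles of the quiver is the number of classes of this relation. -/
def CycleRot {V : Type*} (a : V → V → ℕ)
    (l l' : {l : List (V × V × ℕ) // IsPrimitiveCycle a l}) : Prop :=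
  ∃ k, l.1.rotate k = l'.1

namespace List

theorem exists_eq_append_cons_append_cons_of_not_nodup_map {α β : Type*} {f : α → β}
    {l : List α} (h : ¬ (l.map f).Nodup) :
    ∃ A B C : List α, ∃ x y, l = A ++ x :: (B ++ y :: C) ∧ f x = f y := by
  induction l with
  | nil => simp at h
  | cons z t ih =>
    rw [map_cons, nodup_cons, not_and_or, not_not] at h
    rcases h with hz | ht
    · obtain ⟨y, hy, hfy⟩ := mem_map.1 hz
      obtain ⟨B, C, rfl⟩ := append_of_mem hy
      exact ⟨[], B, C, z, y, rfl, hfy.symm⟩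
    · obtain ⟨A, B, C, x, y, rfl, hxy⟩ := ih ht
      exact ⟨z :: A, B, C, x, y, rfl, hxy⟩

theorem mem_sections_replicate_length {α : Type*} {s l : List α} (h : ∀ x ∈ l, x ∈ s) :
    l ∈ (replicate l.length s).sections := by
  induction l with
  | nil => simp
  | cons x t ih => simp_all [mem_sections, replicate_succ]

end List

section

variable {V : Type*} {a : V → V → ℕ} {l l₁ l₂ : List (V × V × ℕ)}

theorem isOrientedCycle_iff_of_ne_nil (h : l ≠ []) :
    IsOrientedCycle a l ↔ (∀ e ∈ l, e.2.2 < a e.1 e.2.1) ∧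
      l.IsChain (fun e f => e.2.1 = f.1) ∧ (l.getLast h).2.1 = (l.head h).1 := by
  rw [IsOrientedCycle, List.getLast?_eq_some_getLast h, List.head?_eq_some_head h]
  simp only [ne_eq, h, not_false_eq_true, true_and, Option.map_some, Option.some.injEq]
  exact Iff.rfl

theorem isOrientedCycle_append_iff (h₁ : l₁ ≠ []) (h₂ : l₂ ≠ []) :
    IsOrientedCycle a (l₁ ++ l₂) ↔
      ((∀ e ∈ l₁, e.2.2 < a e.1 e.2.1) ∧ (∀ e ∈ l₂, e.2.2 < a e.1 e.2.1)) ∧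
      l₁.IsChain (fun e f => e.2.1 = f.1) ∧ l₂.IsChain (fun e f => e.2.1 = f.1) ∧
      (l₁.getLast h₁).2.1 = (l₂.head h₂).1 ∧ (l₂.getLast h₂).2.1 = (l₁.head h₁).1 := by
  rw [isOrientedCycle_iff_of_ne_nil (List.append_ne_nil_of_left_ne_nil h₁ l₂),
    List.isChain_append, List.getLast_append_of_ne_nil _ h₂, List.head_append_of_ne_nil h₁,
    List.getLast?_eq_some_getLast h₁, List.head?_eq_some_head h₂]
  simp [or_imp, forall_and, and_assoc]

theorem IsOrientedCycle.append_comm (h : IsOrientedCycle a (l₁ ++ l₂)) :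
    IsOrientedCycle a (l₂ ++ l₁) := by
  rcases eq_or_ne l₁ [] with rfl | h₁
  · simpa using h
  rcases eq_or_ne l₂ [] with rfl | h₂
  · simpa using h
  rw [isOrientedCycle_append_iff h₁ h₂] at h
  rw [isOrientedCycle_append_iff h₂ h₁]
  tauto

theorem IsOrientedCycle.rotate (h : IsOrientedCycle a l) (k : ℕ) :
    IsOrientedCycle a (l.rotate k) := by
  rw [← List.take_append_drop (k % l.length) l] at h
  rw [List.rotate_eq_drop_append_take_mod]
  exact h.append_comm

theorem IsOrientedCycle.split {x y : V × V × ℕ} (h : IsOrientedCycle a (x :: l₁ ++ y :: l₂))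
    (hxy : x.1 = y.1) : IsOrientedCycle a (x :: l₁) ∧ IsOrientedCycle a (y :: l₂) := by
  obtain ⟨⟨harr₁, harr₂⟩, hchain₁, hchain₂, hjoin₁, hjoin₂⟩ :=
    (isOrientedCycle_append_iff (List.cons_ne_nil _ _) (List.cons_ne_nil _ _)).1 h
  simp only [List.head_cons] at hjoin₁ hjoin₂
  rw [isOrientedCycle_iff_of_ne_nil (List.cons_ne_nil _ _),
    isOrientedCycle_iff_of_ne_nil (List.cons_ne_nil _ _)]
  exact ⟨⟨harr₁, hchain₁, hjoin₁.trans hxy.symm⟩, ⟨harr₂, hchain₂, hjoin₂.trans hxy⟩⟩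

theorem isPrimitiveCycle_iff :
    IsPrimitiveCycle a l ↔ IsOrientedCycle a l ∧ (l.map Prod.fst).Nodup := by
  constructor
  · rintro ⟨hc, hprim⟩
    refine ⟨hc, ?_⟩
    by_contra hdup
    obtain ⟨A, B, C, x, y, rfl, hxy⟩ :=
      List.exists_eq_append_cons_append_cons_of_not_nodup_map hdup
    have hrot : (A ++ x :: (B ++ y :: C)).rotate A.length = x :: B ++ y :: (C ++ A) := by
      simp [List.rotate_append_length_eq]
    obtain ⟨h₁, h₂⟩ := (hrot ▸ hc.rotate A.length).split hxy
    exact hprim ⟨A.length, _, _, h₁, h₂, hrot⟩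
  · rintro ⟨hc, hnodup⟩
    refine ⟨hc, ?_⟩
    rintro ⟨k, l₁, l₂, h₁, h₂, hk⟩
    obtain ⟨-, -, -, hjoin, -⟩ := (isOrientedCycle_append_iff h₁.1 h₂.1).1 (hk ▸ hc.rotate k)
    have hclose₁ := ((isOrientedCycle_iff_of_ne_nil h₁.1).1 h₁).2.2
    have hsrc : (l₁.head h₁.1).1 = (l₂.head h₂.1).1 := hclose₁.symm.trans hjoin
    have hnodup' : (l₁.map Prod.fst ++ l₂.map Prod.fst).Nodup := by
      rwa [← List.map_append, ← hk, List.map_rotate, List.nodup_rotate]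
    exact List.disjoint_of_nodup_append hnodup' (List.mem_map_of_mem (List.head_mem h₁.1))
      (hsrc ▸ List.mem_map_of_mem (List.head_mem h₂.1))

theorem IsPrimitiveCycle.length_le {vs : List V} (hvs : ∀ v, v ∈ vs)
    (h : IsPrimitiveCycle a l) : l.length ≤ vs.length := by
  simpa using (isPrimitiveCycle_iff.1 h).2.length_le_of_subset fun v _ => hvs v

instance [DecidableEq V] : DecidablePred (IsOrientedCycle a) := fun l =>
  inferInstanceAs (Decidable (l ≠ [] ∧ (∀ e ∈ l, e.2.2 < a e.1 e.2.1) ∧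
    l.IsChain (fun e f => e.2.1 = f.1) ∧
    l.getLast?.map (fun e => e.2.1) = l.head?.map (fun e => e.1)))

instance [DecidableEq V] : DecidablePred (IsPrimitiveCycle a) := fun _ =>
  decidable_of_iff' _ isPrimitiveCycle_iff

def arrowList (a : V → V → ℕ) (vs : List V) : List (V × V × ℕ) :=
  vs.flatMap fun s => vs.flatMap fun t => (List.range (a s t)).map fun k => (s, t, k)

theorem mem_arrowList {vs : List V} (hvs : ∀ v, v ∈ vs) {e : V × V × ℕ} :
    e ∈ arrowList a vs ↔ e.2.2 < a e.1 e.2.1 := by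
  obtain ⟨s, t, k⟩ := e
  simp [arrowList, hvs]

theorem nat_card_quot_cycleRot_eq {ι : Type*} {vs : List V} (hvs : ∀ v, v ∈ vs)
    (reps : ι → List (V × V × ℕ)) (hprim : ∀ i, IsPrimitiveCycle a (reps i))
    (hinj : ∀ i j, reps i ~r reps j → i = j)
    (hcomplete : ∀ m ≤ vs.length, ∀ l ∈ (List.replicate m (arrowList a vs)).sections,
      IsPrimitiveCycle a l → ∃ i, reps i ~r l) :
    Nat.card (Quot (CycleRot a)) = Nat.card ι := by
  have hequiv : Equivalence (CycleRot a) :=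
    ⟨fun _ => List.IsRotated.refl _, List.IsRotated.symm, List.IsRotated.trans⟩
  let toQuot (i : ι) : Quot (CycleRot a) := Quot.mk _ ⟨reps i, hprim i⟩
  have hinjective : Function.Injective toQuot := fun i j hij =>
    hinj i j (hequiv.eqvGen_iff.1 (Quot.eqvGen_exact (r := CycleRot a) hij))
  refine (Nat.card_eq_of_bijective toQuot ⟨hinjective, ?_⟩).symm
  rintro ⟨l, hl⟩
  have hsections : l ∈ (List.replicate l.length (arrowList a vs)).sections :=
    List.mem_sections_replicate_length fun e he => (mem_arrowList hvs).2 (hl.1.2.1 e he)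
  obtain ⟨i, hi⟩ := hcomplete l.length (hl.length_le hvs) l hsections hl
  exact ⟨i, Quot.sound hi⟩

end

theorem nat_card_quot_cycleRot_type4_3a :
    Nat.card (Quot (CycleRot fun i j : Fin 3 => if i = j then 0 else 1)) = 5 := by
  refine (nat_card_quot_cycleRot_eq List.mem_finRange
    (![[(0, 1, 0), (1, 0, 0)], [(0, 2, 0), (2, 0, 0)], [(1, 2, 0), (2, 1, 0)],
      [(0, 1, 0), (1, 2, 0), (2, 0, 0)], [(0, 2, 0), (2, 1, 0), (1, 0, 0)]] :
      Fin 5 → List (Fin 3 × Fin 3 × ℕ)) (by decide) (by decide) (by decide +kernel)).trans ?_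
  simp

theorem nat_card_quot_cycleRot_type4_3b :
    Nat.card (Quot (CycleRot fun i j : Fin 3 => if j = i + 1 then 2 else 0)) = 8 := by
  refine (nat_card_quot_cycleRot_eq List.mem_finRange
    (fun ijk : Fin 2 × Fin 2 × Fin 2 =>
      [(0, 1, ijk.1.val), (1, 2, ijk.2.1.val), (2, 0, ijk.2.2.val)] : _ → List (Fin 3 × Fin 3 × ℕ))
    (by decide) (by decide) (by decide +kernel)).trans ?_
  simp

theorem nat_card_quot_cycleRot_type4_2 :
    Nat.card (Quot (CycleRot fun i j : Fin 2 =>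
      if i = 0 ∧ j = 1 then 2 else if i = 1 ∧ j = 0 then 3 else 0)) = 6 := by
  refine (nat_card_quot_cycleRot_eq List.mem_finRange
    (fun ij : Fin 2 × Fin 3 => [(0, 1, ij.1.val), (1, 0, ij.2.val)] : _ → List (Fin 2 × Fin 2 × ℕ))
    (by decide) (by decide) (by decide +kernel)).trans ?_
  simp

/-- The quivers of types `4_{3a}`, `4_{3b}`, `4_2` have respectively 5, 8 and 6
primitive oriented cycles; in particular these numbers are pairwise distinct. -/
theorem primitive_cycles_dimension_four_distinct :
    let a₁ : Fin 3 → Fin 3 → ℕ := fun i j => if i = j then 0 else 1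
    let a₂ : Fin 3 → Fin 3 → ℕ := fun i j => if j = i + 1 then 2 else 0
    let a₃ : Fin 2 → Fin 2 → ℕ := fun i j =>
      if i = 0 ∧ j = 1 then 2 else if i = 1 ∧ j = 0 then 3 else 0
    Nat.card (Quot (CycleRot a₁)) = 5 ∧
    Nat.card (Quot (CycleRot a₂)) = 8 ∧
    Nat.card (Quot (CycleRot a₃)) = 6 ∧
    (5 : ℕ) ≠ 8 ∧ (5 : ℕ) ≠ 6 ∧ (8 : ℕ) ≠ 6 :=
  ⟨nat_card_quot_cycleRot_type4_3a, nat_card_quot_cycleRot_type4_3b,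
    nat_card_quot_cycleRot_type4_2, by decide, by decide, by decide⟩
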